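/- Naive Künneth fails for rack homology: for the product rack (ℤ, +1) × (S, id) with S a set of cardinality r ≥ 2, the rank of HR_n of the product (which is r(r−1)^{n−1}) differs from Σ_{p+q=n} rank HR_p(ℤ,+1) · rank HR_q(S,id) = r^n + r^{n−1} for n ≥ 2. -/

import Mathlib

/-- Rack chains: free abelian group on `n`-tuples. -/
abbrev CR (X : Type) (n : ℕ) : Type := (Fin n → X) →₀ ℤ

/-- The monomial basis element. -/
noncomputable def mon {X : Type} {n : ℕ} (w : Fin n → X) : CR X n := Finsupp.single w 1

/-- Delete the `(i+1)`-st entry (1-indexed `k = i+1`). -/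
def del {X : Type} {n : ℕ} (w : Fin (n+1) → X) (i : Fin n) : Fin n → X :=
  fun j => if (j : ℕ) < (i : ℕ) then w j.castSucc else w j.succ

/-- Delete the `(i+1)`-st entry and act with it on all later entries. -/
def act {X : Type} (op : X → X → X) {n : ℕ} (w : Fin (n+1) → X) (i : Fin n) : Fin n → X :=
  fun j => if (j : ℕ) < (i : ℕ) then w j.castSucc else op (w i.castSucc) (w j.succ)

/-- Rack differential on a monomial. -/
noncomputable def dMon {X : Type} (op : X → X → X) {n : ℕ} (w : Fin (n+1) → X) : CR X n :=
  ∑ i : Fin n, ((-1 : ℤ) ^ (i : ℕ)) • (mon (del w i) - mon (act op w i))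

/-- The rack differential `CR_{n+1} → CR_n`. -/
noncomputable def d {X : Type} (op : X → X → X) (n : ℕ) : CR X (n+1) →+ CR X n :=
  Finsupp.liftAddHom fun w => zmultiplesHom _ (dMon op w)

/-- Left concatenation `w ↦ x·w`. -/
noncomputable def consHom {X : Type} (x : X) (n : ℕ) : CR X n →+ CR X (n+1) :=
  Finsupp.liftAddHom fun w => zmultiplesHom _ (mon (Fin.cons x w))

/-- Diagonal action of a map `φ` on chains. -/
noncomputable def mapChains {X : Type} (φ : X → X) (n : ℕ) : CR X n →+ CR X n :=
  Finsupp.liftAddHom fun w => zmultiplesHom _ (mon (φ ∘ w))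

/-- Cycles. -/
noncomputable def ZC {X : Type} (op : X → X → X) : (n : ℕ) → AddSubgroup (CR X n)
  | 0 => ⊤
  | (m+1) => (d op m).ker

/-- Boundaries. -/
noncomputable def BC {X : Type} (op : X → X → X) (n : ℕ) : AddSubgroup (CR X n) :=
  (d op n).range

/-- Rack homology. -/
abbrev HR (X : Type) (op : X → X → X) (n : ℕ) : Type :=
  ZC op n ⧸ ((BC op n).addSubgroupOf (ZC op n))

/-- The rack operation of a permutation rack. -/
def permOp {X : Type} (φ : X ≃ X) : X → X → X := fun _ y => φ y

/-- Multiplication by an element of `ℤX`. -/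
noncomputable def mulChain {X : Type} (v : X →₀ ℤ) (n : ℕ) : CR X n →+ CR X (n+1) :=
  ∑ x ∈ v.support, v x • consHom x n

/-- The product rack `(ℤ, +1) × (S, id)`: componentwise rack operation. -/
def prodOp (S : Type) : ℤ × S → ℤ × S → ℤ × S := fun _ p => (p.1 + 1, p.2)

/-!
In difference coordinates (each letter's `ℤ`-coordinate replaced by its difference with the
previous letter's) the rack differential of `(ℤ, +1) × (S, id)` deletes the first letter `(a, s)`
of a word and adds `a`, resp. `a + 1`, to the `ℤ`-coordinate of the next letter. After the change
of letter basis `(a, s) ↦ (a, s) - (a, s₀)` for `s ≠ s₀`, only the letters over a fixed `s₀` act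
in this way. This complex deformation retracts onto the span of the normal words
`(0, t₁) ⋯ (0, tₙ₋₁) (0, s)` with all `tᵢ ≠ s₀`, which are cycles: a first letter over `s₀` that
is not the last one is contracted away, and prepending `(u ^ c - 1) / (1 - u)` in letters over
`s₀` is a homotopy from the head shift by `c` to the identity, which brings every other first
letter to `ℤ`-coordinate `0`. Hence `HR_n` is free of rank `r (r - 1) ^ (n - 1)`, and
`r (r - 1) ^ (n - 1) ≤ r ^ n < r ^ n + r ^ (n - 1)`.
-/

noncomputable section

namespace ProductRack

open Finsupp

section Chains

variable {X : Type}

theorem liftAddHom_mon {G : Type} [AddCommGroup G] {n : ℕ} (f : (Fin n → X) → G)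
    (w : Fin n → X) : liftAddHom (fun w => zmultiplesHom G (f w)) (mon w) = f w := by
  simp [mon]

theorem hom_ext_apply_of_single {α G : Type} [AddCommGroup G] {f g : (α →₀ ℤ) →+ G}
    (h : ∀ a, f (single a 1) = g (single a 1)) (x : α →₀ ℤ) : f x = g x :=
  DFunLike.congr_fun (addHom_ext' fun a => AddMonoidHom.ext_int (h a)) x

theorem chain_hom_ext_apply {G : Type} [AddCommGroup G] {n : ℕ} {f g : CR X n →+ G}
    (h : ∀ w, f (mon w) = g (mon w)) (x : CR X n) : f x = g x :=
  hom_ext_apply_of_single h x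

theorem chain_hom_ext_apply_cons {G : Type} [AddCommGroup G] {n : ℕ} {f g : CR X (n+1) →+ G}
    (h : ∀ y v, f (mon (Fin.cons y v)) = g (mon (Fin.cons y v))) (x : CR X (n+1)) : f x = g x :=
  chain_hom_ext_apply (fun w => by rw [← Fin.cons_self_tail w]; exact h _ _) x

theorem consHom_mon (y : X) {n : ℕ} (w : Fin n → X) :
    consHom y n (mon w) = mon (Fin.cons y w) :=
  liftAddHom_mon _ w

theorem chain_hom_ext_apply_consHom {G : Type} [AddCommGroup G] {n : ℕ}
    {f g : CR X (n+1) →+ G} (h : ∀ y x, f (consHom y n x) = g (consHom y n x))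
    (x : CR X (n+1)) : f x = g x :=
  chain_hom_ext_apply_cons (fun y v => by rw [← consHom_mon]; exact h y _) x

theorem d_mon (op : X → X → X) (n : ℕ) (w : Fin (n+1) → X) : d op n (mon w) = dMon op w :=
  liftAddHom_mon _ w

theorem d_zero (op : X → X → X) : d op 0 = 0 := by
  ext w
  simp [d, dMon]

theorem del_cons_succ {n : ℕ} (y : X) (v : Fin (n+1) → X) (j : Fin n) :
    del (Fin.cons y v) j.succ = Fin.cons y (del v j) := by
  funext k
  induction k using Fin.cases with
  | zero => simp [del]
  | succ k =>
    simp only [del, Fin.cons_succ, Fin.val_succ, Nat.add_lt_add_iff_right]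
    split_ifs <;> simp

theorem act_cons_succ (op : X → X → X) {n : ℕ} (y : X) (v : Fin (n+1) → X) (j : Fin n) :
    act op (Fin.cons y v) j.succ = Fin.cons y (act op v j) := by
  funext k
  induction k using Fin.cases with
  | zero => simp [act]
  | succ k =>
    simp only [act, Fin.cons_succ, Fin.val_succ, Nat.add_lt_add_iff_right]
    split_ifs <;> simp

/-- The two faces at the first letter delete it, and since `op x y` does not depend on `x`, the
other faces leave it untouched. -/
theorem d_cons_of_perm {op : X → X → X} {φ : X → X} (hop : ∀ x y, op x y = φ y) (n : ℕ)
    (y : X) (v : Fin (n+1) → X) :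
    d op (n+1) (mon (Fin.cons y v)) = mon v - mon (φ ∘ v) - consHom y n (d op n (mon v)) := by
  have hdel : del (Fin.cons y v) 0 = v := by funext k; simp [del]
  have hact : act op (Fin.cons y v) 0 = φ ∘ v := by funext k; simp [act, hop]
  rw [d_mon, d_mon, dMon, dMon, Fin.sum_univ_succ, map_sum]
  simp only [Fin.val_zero, pow_zero, one_smul, hdel, hact, Fin.val_succ, pow_succ, mul_neg_one,
    neg_smul, del_cons_succ, act_cons_succ, map_zsmul, map_sub, consHom_mon,
    Finset.sum_neg_distrib]
  abel

theorem nonempty_HR_addEquiv_of_retraction {op : X → X → X} {m : ℕ} {G : Type}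
    [AddCommGroup G] (P : CR X (m+1) →+ G) (I : G →+ CR X (m+1)) (H : CR X (m+1) →+ CR X (m+2))
    (hPI : ∀ g, P (I g) = g) (hdI : ∀ g, d op m (I g) = 0) (hPd : ∀ x, P (d op (m+1) x) = 0)
    (hcycle : ∀ x, d op m x = 0 → x = I (P x) + d op (m+1) (H x)) :
    Nonempty (HR X op (m+1) ≃+ G) := by
  let N := (BC op (m+1)).addSubgroupOf (ZC op (m+1))
  let F := QuotientAddGroup.lift N (P.comp (ZC op (m+1)).subtype) <| by
    rintro z ⟨x, hx⟩
    exact AddMonoidHom.mem_ker.mpr ((congrArg P hx).symm.trans (hPd x))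
  have hsurj : Function.Surjective F := fun g =>
    ⟨QuotientAddGroup.mk ⟨I g, hdI g⟩, hPI g⟩
  have hinj : Function.Injective F := by
    refine (injective_iff_map_eq_zero F).mpr fun a => QuotientAddGroup.induction_on a ?_
    intro z hz
    replace hz : P z = 0 := hz
    have hz' := hcycle z z.2
    rw [hz, map_zero, zero_add] at hz'
    exact (QuotientAddGroup.eq_zero_iff _).mpr ⟨H z, hz'.symm⟩
  exact ⟨AddEquiv.ofBijective F ⟨hinj, hsurj⟩⟩

end Chains

section HeadShift

open scoped Classical

variable {S : Type}

def shiftLetter (a : ℤ) (y : ℤ × S) : ℤ × S := (y.1 + a, y.2)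

@[simp] theorem shiftLetter_fst (a : ℤ) (y : ℤ × S) : (shiftLetter a y).1 = y.1 + a := rfl
@[simp] theorem shiftLetter_snd (a : ℤ) (y : ℤ × S) : (shiftLetter a y).2 = y.2 := rfl

theorem d_prodOp_cons (n : ℕ) (y : ℤ × S) (v : Fin (n+1) → ℤ × S) :
    d (prodOp S) (n+1) (mon (Fin.cons y v)) =
      mon v - mon (shiftLetter 1 ∘ v) - consHom y n (d (prodOp S) n (mon v)) :=
  d_cons_of_perm (φ := shiftLetter 1) (fun _ _ => rfl) n y v

def shiftHead (a : ℤ) (n : ℕ) : CR (ℤ × S) (n+1) →+ CR (ℤ × S) (n+1) :=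
  liftAddHom fun w => zmultiplesHom _ (mon (Fin.cons (shiftLetter a (w 0)) (Fin.tail w)))

theorem shiftHead_cons (a : ℤ) {n : ℕ} (y : ℤ × S) (v : Fin n → ℤ × S) :
    shiftHead a n (mon (Fin.cons y v)) = mon (Fin.cons (shiftLetter a y) v) := by
  rw [shiftHead, liftAddHom_mon, Fin.cons_zero, Fin.tail_cons]

theorem shiftHead_consHom (a : ℤ) (n : ℕ) (y : ℤ × S) (x : CR (ℤ × S) n) :
    shiftHead a n (consHom y n x) = consHom (shiftLetter a y) n x := by
  refine chain_hom_ext_apply (f := (shiftHead a n).comp (consHom y n))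
    (g := consHom (shiftLetter a y) n) (fun w => ?_) x
  rw [AddMonoidHom.comp_apply, consHom_mon, shiftHead_cons, consHom_mon]

theorem shiftHead_zero_apply (n : ℕ) (x : CR (ℤ × S) (n+1)) : shiftHead 0 n x = x := by
  refine chain_hom_ext_apply_cons (g := AddMonoidHom.id _) (fun y v => ?_) x
  simp [shiftHead_cons, shiftLetter]

/-- Only the letters over `A` act on the rest of the word; `A = Set.univ` gives the rack
differential in difference coordinates. -/
def modelD (A : Set S) : (n : ℕ) → CR (ℤ × S) (n+1) →+ CR (ℤ × S) n
  | 0 => 0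
  | n+1 => liftAddHom fun w => zmultiplesHom _
      ((if (w 0).2 ∈ A then
          shiftHead (w 0).1 n (mon (Fin.tail w)) - shiftHead ((w 0).1 + 1) n (mon (Fin.tail w))
        else 0)
        - consHom (w 0) n (modelD A n (mon (Fin.tail w))))

theorem modelD_zero (A : Set S) : modelD A 0 = 0 := rfl

theorem modelD_cons (A : Set S) (n : ℕ) (y : ℤ × S) (v : Fin (n+1) → ℤ × S) :
    modelD A (n+1) (mon (Fin.cons y v)) =
      (if y.2 ∈ A then shiftHead y.1 n (mon v) - shiftHead (y.1 + 1) n (mon v) else 0)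
        - consHom y n (modelD A n (mon v)) := by
  rw [modelD, liftAddHom_mon, Fin.cons_zero, Fin.tail_cons]

theorem modelD_consHom (A : Set S) (n : ℕ) (y : ℤ × S) (x : CR (ℤ × S) (n+1)) :
    modelD A (n+1) (consHom y (n+1) x) =
      (if y.2 ∈ A then shiftHead y.1 n x - shiftHead (y.1 + 1) n x else 0)
        - consHom y n (modelD A n x) := by
  refine chain_hom_ext_apply (f := (modelD A (n+1)).comp (consHom y (n+1)))
    (g := (if y.2 ∈ A then shiftHead y.1 n - shiftHead (y.1 + 1) n else 0)
      - (consHom y n).comp (modelD A n)) (fun w => ?_) x |>.trans ?_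
  · rw [AddMonoidHom.comp_apply, consHom_mon, modelD_cons]
    split_ifs <;> rfl
  · split_ifs <;> rfl

end HeadShift

section DifferenceCoordinates

variable {S : Type}

def toDiff : (n : ℕ) → ℤ → (Fin n → ℤ × S) → (Fin n → ℤ × S)
  | 0, _, w => w
  | n+1, a, w => Fin.cons ((w 0).1 - a, (w 0).2) (toDiff n (w 0).1 (Fin.tail w))

def ofDiff : (n : ℕ) → ℤ → (Fin n → ℤ × S) → (Fin n → ℤ × S)
  | 0, _, w => w
  | n+1, a, w => Fin.cons ((w 0).1 + a, (w 0).2) (ofDiff n ((w 0).1 + a) (Fin.tail w))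

theorem toDiff_cons (n : ℕ) (a : ℤ) (y : ℤ × S) (v : Fin n → ℤ × S) :
    toDiff (n+1) a (Fin.cons y v) = Fin.cons (y.1 - a, y.2) (toDiff n y.1 v) := by
  rw [toDiff, Fin.cons_zero, Fin.tail_cons]

theorem ofDiff_cons (n : ℕ) (a : ℤ) (y : ℤ × S) (v : Fin n → ℤ × S) :
    ofDiff (n+1) a (Fin.cons y v) = Fin.cons (y.1 + a, y.2) (ofDiff n (y.1 + a) v) := by
  rw [ofDiff, Fin.cons_zero, Fin.tail_cons]

theorem toDiff_ofDiff (n : ℕ) (a : ℤ) (w : Fin n → ℤ × S) : toDiff n a (ofDiff n a w) = w := by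
  induction n generalizing a with
  | zero => rfl
  | succ n ih => rw [← Fin.cons_self_tail w, ofDiff_cons, toDiff_cons, ih]; simp

theorem ofDiff_toDiff (n : ℕ) (a : ℤ) (w : Fin n → ℤ × S) : ofDiff n a (toDiff n a w) = w := by
  induction n generalizing a with
  | zero => rfl
  | succ n ih => rw [← Fin.cons_self_tail w, toDiff_cons, ofDiff_cons, sub_add_cancel, ih]

theorem toDiff_shiftLetter (n : ℕ) (a : ℤ) (w : Fin n → ℤ × S) :
    toDiff n a (shiftLetter 1 ∘ w) = toDiff n (a - 1) w := by
  induction n generalizing a with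
  | zero => exact funext fun i => i.elim0
  | succ n ih =>
    rw [← Fin.cons_self_tail w, Fin.comp_cons, toDiff_cons, toDiff_cons, ih]
    simp [shiftLetter, sub_sub_eq_add_sub]

def diffEquiv (n : ℕ) (a : ℤ) : CR (ℤ × S) n ≃+ CR (ℤ × S) n :=
  Finsupp.domCongr ⟨toDiff n a, ofDiff n a, ofDiff_toDiff n a, toDiff_ofDiff n a⟩

theorem diffEquiv_mon (n : ℕ) (a : ℤ) (w : Fin n → ℤ × S) :
    diffEquiv n a (mon w) = mon (toDiff n a w) := by
  simp [diffEquiv, mon]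

theorem diffEquiv_consHom (n : ℕ) (a : ℤ) (y : ℤ × S) (x : CR (ℤ × S) n) :
    diffEquiv (n+1) a (consHom y n x) = consHom (y.1 - a, y.2) n (diffEquiv n y.1 x) := by
  refine chain_hom_ext_apply (f := (diffEquiv (n+1) a).toAddMonoidHom.comp (consHom y n))
    (g := (consHom (y.1 - a, y.2) n).comp (diffEquiv n y.1).toAddMonoidHom) (fun w => ?_) x
  simp only [AddMonoidHom.comp_apply, AddEquiv.coe_toAddMonoidHom]
  rw [consHom_mon, diffEquiv_mon, toDiff_cons, diffEquiv_mon, consHom_mon]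

theorem shiftHead_toDiff (n : ℕ) (a b : ℤ) (v : Fin (n+1) → ℤ × S) :
    shiftHead (b - a) n (mon (toDiff (n+1) b v)) = mon (toDiff (n+1) a v) := by
  rw [← Fin.cons_self_tail v, toDiff_cons, toDiff_cons, shiftHead_cons]
  simp [shiftLetter]

/-- In difference coordinates, deleting the first letter passes its `ℤ`-coordinate on to the
next letter, a head shift, and adding `1` to all later letters changes only the next one. -/
theorem diffEquiv_d (n : ℕ) (a : ℤ) (x : CR (ℤ × S) (n+1)) :
    diffEquiv n a (d (prodOp S) n x) = modelD Set.univ n (diffEquiv (n+1) a x) := by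
  induction n generalizing a with
  | zero => simp [d_zero, modelD_zero]
  | succ n ih =>
    refine chain_hom_ext_apply_cons
      (f := (diffEquiv (n+1) a).toAddMonoidHom.comp (d (prodOp S) (n+1)))
      (g := (modelD Set.univ (n+1)).comp (diffEquiv (n+2) a).toAddMonoidHom) (fun y v => ?_) x
    simp only [AddMonoidHom.comp_apply, AddEquiv.coe_toAddMonoidHom]
    rw [d_prodOp_cons, map_sub, map_sub, diffEquiv_consHom, ih]
    simp only [diffEquiv_mon, toDiff_cons, modelD_cons, Set.mem_univ, if_true,
      toDiff_shiftLetter, ← shiftHead_toDiff n a y.1, ← shiftHead_toDiff n (a - 1) y.1]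
    rw [sub_sub_eq_add_sub, sub_add_eq_add_sub]

end DifferenceCoordinates

section Rebase

open scoped Classical

variable {S : Type} (s₀ : S)

def consRebase (c : ℤ) (y : ℤ × S) (n : ℕ) : CR (ℤ × S) n →+ CR (ℤ × S) (n+1) :=
  consHom y n + if y.2 = s₀ then 0 else c • consHom (y.1, s₀) n

theorem consRebase_of_snd_eq {c : ℤ} {y : ℤ × S} (h : y.2 = s₀) (n : ℕ) :
    consRebase s₀ c y n = consHom y n := by
  rw [consRebase, if_pos h, add_zero]

theorem shiftHead_consRebase (a c : ℤ) (y : ℤ × S) (n : ℕ) (x : CR (ℤ × S) n) :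
    shiftHead a n (consRebase s₀ c y n x) = consRebase s₀ c (shiftLetter a y) n x := by
  by_cases h : y.2 = s₀ <;> simp [consRebase, h, shiftHead_consHom, shiftLetter]

def rebase (c : ℤ) : (n : ℕ) → CR (ℤ × S) n →+ CR (ℤ × S) n
  | 0 => AddMonoidHom.id _
  | n+1 => liftAddHom fun w => zmultiplesHom _
      (consRebase s₀ c (w 0) n (rebase c n (mon (Fin.tail w))))

variable {s₀}

theorem rebase_cons (c : ℤ) (n : ℕ) (y : ℤ × S) (v : Fin n → ℤ × S) :
    rebase s₀ c (n+1) (mon (Fin.cons y v)) = consRebase s₀ c y n (rebase s₀ c n (mon v)) := by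
  rw [rebase, liftAddHom_mon, Fin.cons_zero, Fin.tail_cons]

theorem rebase_consHom (c : ℤ) (n : ℕ) (y : ℤ × S) (x : CR (ℤ × S) n) :
    rebase s₀ c (n+1) (consHom y n x) = consRebase s₀ c y n (rebase s₀ c n x) := by
  refine chain_hom_ext_apply (f := (rebase s₀ c (n+1)).comp (consHom y n))
    (g := (consRebase s₀ c y n).comp (rebase s₀ c n)) (fun w => ?_) x
  rw [AddMonoidHom.comp_apply, consHom_mon, rebase_cons, AddMonoidHom.comp_apply]

theorem rebase_consRebase (c c' : ℤ) (n : ℕ) (y : ℤ × S) (x : CR (ℤ × S) n) :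
    rebase s₀ c (n+1) (consRebase s₀ c' y n x) =
      consRebase s₀ (c + c') y n (rebase s₀ c n x) := by
  by_cases h : y.2 = s₀
  · rw [consRebase_of_snd_eq s₀ h, consRebase_of_snd_eq s₀ h, rebase_consHom,
      consRebase_of_snd_eq s₀ h]
  · rw [consRebase, if_neg h, AddMonoidHom.add_apply, map_add, AddMonoidHom.smul_apply,
      map_zsmul, rebase_consHom, rebase_consHom, consRebase_of_snd_eq s₀ (y := (y.1, s₀)) rfl,
      consRebase, consRebase, if_neg h, if_neg h]
    simp only [AddMonoidHom.add_apply, AddMonoidHom.smul_apply, add_smul]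
    abel

theorem rebase_rebase (c c' : ℤ) (n : ℕ) (x : CR (ℤ × S) n) :
    rebase s₀ c n (rebase s₀ c' n x) = rebase s₀ (c + c') n x := by
  induction n with
  | zero => rfl
  | succ n ih =>
    refine chain_hom_ext_apply_cons (f := (rebase s₀ c (n+1)).comp (rebase s₀ c' (n+1)))
      (g := rebase s₀ (c + c') (n+1)) (fun y v => ?_) x
    rw [AddMonoidHom.comp_apply, rebase_cons, rebase_consRebase, ih, rebase_cons]

theorem rebase_zero_apply (n : ℕ) (x : CR (ℤ × S) n) : rebase s₀ 0 n x = x := by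
  induction n with
  | zero => rfl
  | succ n ih =>
    refine chain_hom_ext_apply_cons (g := AddMonoidHom.id _) (fun y v => ?_) x
    rw [rebase_cons, ih, consRebase]
    split_ifs <;> simp [consHom_mon]

theorem shiftHead_rebase (a c : ℤ) (n : ℕ) (x : CR (ℤ × S) (n+1)) :
    shiftHead a n (rebase s₀ c (n+1) x) = rebase s₀ c (n+1) (shiftHead a n x) := by
  refine chain_hom_ext_apply_cons (f := (shiftHead a n).comp (rebase s₀ c (n+1)))
    (g := (rebase s₀ c (n+1)).comp (shiftHead a n)) (fun y v => ?_) x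
  simp only [AddMonoidHom.comp_apply]
  rw [rebase_cons, shiftHead_consRebase, shiftHead_cons, rebase_cons]

theorem modelD_univ_consRebase (n : ℕ) (y : ℤ × S) (x : CR (ℤ × S) (n+1)) :
    modelD Set.univ (n+1) (consRebase s₀ (-1) y (n+1) x) =
      (if y.2 = s₀ then shiftHead y.1 n x - shiftHead (y.1 + 1) n x else 0)
        - consRebase s₀ (-1) y n (modelD Set.univ n x) := by
  by_cases h : y.2 = s₀
  · rw [consRebase_of_snd_eq s₀ h, consRebase_of_snd_eq s₀ h, modelD_consHom,
      if_pos (Set.mem_univ _), if_pos h]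
  · simp only [consRebase, if_neg h, AddMonoidHom.add_apply, AddMonoidHom.smul_apply, map_add,
      map_zsmul, modelD_consHom, Set.mem_univ, if_true]
    abel

/-- A letter `(a, s)` with `s ≠ s₀` and its correction term `(a, s₀)` shift the head by the same
amount, so their contributions cancel. -/
theorem modelD_univ_rebase (n : ℕ) (x : CR (ℤ × S) (n+1)) :
    modelD Set.univ n (rebase s₀ (-1) (n+1) x) = rebase s₀ (-1) n (modelD {s₀} n x) := by
  induction n with
  | zero => simp [modelD_zero]
  | succ n ih =>
    refine chain_hom_ext_apply_cons (f := (modelD Set.univ (n+1)).comp (rebase s₀ (-1) (n+2)))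
      (g := (rebase s₀ (-1) (n+1)).comp (modelD {s₀} (n+1))) (fun y v => ?_) x
    simp only [AddMonoidHom.comp_apply]
    rw [rebase_cons, modelD_univ_consRebase, ih, modelD_cons, map_sub,
      rebase_consHom]
    simp only [Set.mem_singleton_iff]
    split_ifs <;> simp [shiftHead_rebase]

theorem rebase_modelD_univ (n : ℕ) (x : CR (ℤ × S) (n+1)) :
    rebase s₀ 1 n (modelD Set.univ n x) = modelD {s₀} n (rebase s₀ 1 (n+1) x) := by
  have h := modelD_univ_rebase (s₀ := s₀) n (rebase s₀ 1 (n+1) x)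
  rw [rebase_rebase, neg_add_cancel, rebase_zero_apply] at h
  rw [h, rebase_rebase, add_neg_cancel, rebase_zero_apply]

variable (s₀) in
def rebaseEquiv (n : ℕ) : CR (ℤ × S) n ≃+ CR (ℤ × S) n where
  toFun := rebase s₀ 1 n
  invFun := rebase s₀ (-1) n
  left_inv x := by rw [rebase_rebase, neg_add_cancel, rebase_zero_apply]
  right_inv x := by rw [rebase_rebase, add_neg_cancel, rebase_zero_apply]
  map_add' := map_add _

end Rebase

section GeometricSeries

/-- `geom c = (u ^ c - 1) / (1 - u)` in `ℤ[u, u⁻¹]`, written as `ℤ →₀ ℤ`. -/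
def geom (c : ℤ) : ℤ →₀ ℤ :=
  ∑ j ∈ Finset.Ico c 0, single j 1 - ∑ j ∈ Finset.Ico 0 c, single j 1

theorem geom_zero : geom 0 = 0 := by simp [geom]

theorem geom_add_one (c : ℤ) : geom (c + 1) = geom c - single c 1 := by
  rcases le_or_gt 0 c with h | h
  · rw [geom, geom, Finset.Ico_eq_empty_of_le (by omega : (0 : ℤ) ≤ c + 1),
      Finset.Ico_eq_empty_of_le h, ← Order.succ_eq_add_one,
      ← Finset.insert_Ico_right_eq_Ico_succ h, Finset.sum_insert (by simp)]
    abel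
  · rw [geom, geom, Finset.Ico_eq_empty_of_le (by omega : c + 1 ≤ 0),
      Finset.Ico_eq_empty_of_le h.le, ← Finset.insert_Ico_succ_left_eq_Ico h,
      Finset.sum_insert (by simp), Order.succ_eq_add_one]
    abel

theorem geom_sub_one (c : ℤ) : geom (c - 1) = geom c + single (c - 1) 1 := by
  rw [eq_add_of_sub_eq' (geom_add_one (c - 1)).symm, sub_add_cancel, add_comm]

theorem geom_add (a c : ℤ) :
    geom (a + c) = geom a + Finsupp.domCongr (Equiv.addRight a) (geom c) := by
  induction c using Int.induction_on with
  | zero => simp [geom_zero]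
  | succ k ih =>
    rw [← add_assoc, geom_add_one, ih, geom_add_one, map_sub]
    simp only [Finsupp.domCongr_apply, equivMapDomain_single, Equiv.coe_addRight]
    rw [add_comm (k : ℤ) a, add_sub_assoc]
  | pred k ih =>
    rw [← add_sub_assoc, geom_sub_one, ih, geom_sub_one, map_add]
    simp only [Finsupp.domCongr_apply, equivMapDomain_single, Equiv.coe_addRight]
    rw [add_comm (-(k : ℤ) - 1) a, add_sub_assoc, add_assoc]

end GeometricSeries

section FiberLetters

variable {S : Type} (s₀ : S)

def fiberPrepend (n : ℕ) : (ℤ →₀ ℤ) →+ (CR (ℤ × S) n →+ CR (ℤ × S) (n+1)) :=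
  liftAddHom fun a => zmultiplesHom _ (consHom (a, s₀) n)

theorem fiberPrepend_single (n : ℕ) (a : ℤ) :
    fiberPrepend s₀ n (single a 1) = consHom (a, s₀) n := by
  simp [fiberPrepend]

def headDiff (n : ℕ) : (ℤ →₀ ℤ) →+ (CR (ℤ × S) (n+1) →+ CR (ℤ × S) (n+1)) :=
  liftAddHom fun a => zmultiplesHom _ (shiftHead a n - shiftHead (a + 1) n)

variable {s₀}

theorem headDiff_single (n : ℕ) (a : ℤ) :
    headDiff (S := S) n (single a 1) = shiftHead a n - shiftHead (a + 1) n := by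
  simp [headDiff]

theorem headDiff_geom (n : ℕ) (c : ℤ) (x : CR (ℤ × S) (n+1)) :
    headDiff n (geom c) x = shiftHead c n x - x := by
  induction c using Int.induction_on with
  | zero => rw [geom_zero, map_zero, AddMonoidHom.zero_apply, shiftHead_zero_apply, sub_self]
  | succ k ih =>
    rw [geom_add_one, map_sub, AddMonoidHom.sub_apply, ih, headDiff_single,
      AddMonoidHom.sub_apply]
    abel
  | pred k ih =>
    rw [geom_sub_one, map_add, AddMonoidHom.add_apply, ih, headDiff_single,
      AddMonoidHom.sub_apply, sub_add_cancel]
    abel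

theorem modelD_fiberPrepend (n : ℕ) (p : ℤ →₀ ℤ) (x : CR (ℤ × S) (n+1)) :
    modelD {s₀} (n+1) (fiberPrepend s₀ (n+1) p x) =
      headDiff n p x - fiberPrepend s₀ n p (modelD {s₀} n x) := by
  refine hom_ext_apply_of_single (f := (modelD {s₀} (n+1)).comp ((fiberPrepend s₀ (n+1)).flip x))
    (g := (headDiff n).flip x - (fiberPrepend s₀ n).flip (modelD {s₀} n x)) (fun a => ?_) p
  simp only [AddMonoidHom.comp_apply, AddMonoidHom.sub_apply, AddMonoidHom.flip_apply,
    fiberPrepend_single, headDiff_single, modelD_consHom, Set.mem_singleton_iff, if_true]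

theorem shiftHead_fiberPrepend (a : ℤ) (n : ℕ) (p : ℤ →₀ ℤ) (x : CR (ℤ × S) n) :
    shiftHead a n (fiberPrepend s₀ n p x) =
      fiberPrepend s₀ n (Finsupp.domCongr (Equiv.addRight a) p) x := by
  refine hom_ext_apply_of_single (f := (shiftHead a n).comp ((fiberPrepend s₀ n).flip x))
    (g := ((fiberPrepend s₀ n).flip x).comp (Finsupp.domCongr (Equiv.addRight a)).toAddMonoidHom)
    (fun b => ?_) p
  simp [fiberPrepend_single, shiftHead_consHom, shiftLetter]

end FiberLetters

section NormalForms

open scoped Classical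

variable {S : Type} (s₀ : S)

abbrev NormalForm (n : ℕ) : Type := (Fin n → {t : S // t ≠ s₀}) × S

variable {s₀}

def normalWord {n : ℕ} (q : NormalForm s₀ n) : Fin (n+1) → ℤ × S :=
  Fin.snoc (fun i => ((0 : ℤ), (q.1 i : S))) (0, q.2)

def NormalForm.cons (t : {t : S // t ≠ s₀}) {n : ℕ} (q : NormalForm s₀ n) :
    NormalForm s₀ (n+1) :=
  (Fin.cons t q.1, q.2)

theorem NormalForm.exists_eq_cons {n : ℕ} (q : NormalForm s₀ (n+1)) :
    ∃ (t : {t : S // t ≠ s₀}) (q' : NormalForm s₀ n), q = q'.cons t :=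
  ⟨q.1 0, (Fin.tail q.1, q.2), by simp [NormalForm.cons]⟩

theorem normalWord_cons (t : {t : S // t ≠ s₀}) {n : ℕ} (q : NormalForm s₀ n) :
    normalWord (q.cons t) = Fin.cons (0, (t : S)) (normalWord q) := by
  rw [normalWord, normalWord, NormalForm.cons, Fin.cons_snoc_eq_snoc_cons]
  congr 1
  funext i
  cases i using Fin.cases <;> rfl

variable (s₀)

def ofNormalForms (n : ℕ) : (NormalForm s₀ n →₀ ℤ) →+ CR (ℤ × S) (n+1) :=
  liftAddHom fun q => zmultiplesHom _ (mon (normalWord q))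

def toNormalForms : (n : ℕ) → CR (ℤ × S) (n+1) →+ (NormalForm s₀ n →₀ ℤ)
  | 0 => liftAddHom fun w => zmultiplesHom _ (single (finZeroElim, (w 0).2) 1)
  | n+1 => liftAddHom fun w => zmultiplesHom _
      (if h : (w 0).2 = s₀ then 0
       else mapDomain (NormalForm.cons ⟨(w 0).2, h⟩) (toNormalForms n (mon (Fin.tail w))))

def normalize (n : ℕ) : CR (ℤ × S) (n+1) →+ CR (ℤ × S) (n+1) :=
  (ofNormalForms s₀ n).comp (toNormalForms s₀ n)

variable {s₀}

theorem ofNormalForms_single {n : ℕ} (q : NormalForm s₀ n) :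
    ofNormalForms s₀ n (single q 1) = mon (normalWord q) := by
  simp [ofNormalForms]

theorem toNormalForms_zero_mon (w : Fin 1 → ℤ × S) :
    toNormalForms s₀ 0 (mon w) = single (finZeroElim, (w 0).2) 1 :=
  liftAddHom_mon _ w

theorem toNormalForms_cons (n : ℕ) (y : ℤ × S) (v : Fin (n+1) → ℤ × S) :
    toNormalForms s₀ (n+1) (mon (Fin.cons y v)) =
      if h : y.2 = s₀ then 0
      else mapDomain (NormalForm.cons ⟨y.2, h⟩) (toNormalForms s₀ n (mon v)) := by
  rw [toNormalForms, liftAddHom_mon, Fin.cons_zero, Fin.tail_cons]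

theorem toNormalForms_consHom_of_eq (n : ℕ) {y : ℤ × S} (h : y.2 = s₀) (x : CR (ℤ × S) (n+1)) :
    toNormalForms s₀ (n+1) (consHom y (n+1) x) = 0 := by
  refine chain_hom_ext_apply (f := (toNormalForms s₀ (n+1)).comp (consHom y (n+1))) (g := 0)
    (fun w => ?_) x
  rw [AddMonoidHom.comp_apply, consHom_mon, toNormalForms_cons, dif_pos h,
    AddMonoidHom.zero_apply]

theorem toNormalForms_consHom_of_ne (n : ℕ) {y : ℤ × S} (h : y.2 ≠ s₀) (x : CR (ℤ × S) (n+1)) :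
    toNormalForms s₀ (n+1) (consHom y (n+1) x) =
      mapDomain (NormalForm.cons ⟨y.2, h⟩) (toNormalForms s₀ n x) := by
  refine chain_hom_ext_apply (f := (toNormalForms s₀ (n+1)).comp (consHom y (n+1)))
    (g := (mapDomain.addMonoidHom (NormalForm.cons ⟨y.2, h⟩)).comp (toNormalForms s₀ n))
    (fun w => ?_) x
  rw [AddMonoidHom.comp_apply, consHom_mon, toNormalForms_cons, dif_neg h,
    AddMonoidHom.comp_apply, mapDomain.addMonoidHom_apply]

theorem toNormalForms_shiftHead (a : ℤ) (n : ℕ) (x : CR (ℤ × S) (n+1)) :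
    toNormalForms s₀ n (shiftHead a n x) = toNormalForms s₀ n x := by
  refine chain_hom_ext_apply_cons (f := (toNormalForms s₀ n).comp (shiftHead a n))
    (g := toNormalForms s₀ n) (fun y v => ?_) x
  rw [AddMonoidHom.comp_apply, shiftHead_cons]
  cases n with
  | zero => simp only [toNormalForms_zero_mon, Fin.cons_zero, shiftLetter_snd]
  | succ n => rw [toNormalForms_cons, toNormalForms_cons]; rfl

theorem ofNormalForms_mapDomain_cons (t : {t : S // t ≠ s₀}) (n : ℕ)
    (ξ : NormalForm s₀ n →₀ ℤ) :
    ofNormalForms s₀ (n+1) (mapDomain (NormalForm.cons t) ξ) =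
      consHom (0, (t : S)) (n+1) (ofNormalForms s₀ n ξ) := by
  refine hom_ext_apply_of_single
    (f := (ofNormalForms s₀ (n+1)).comp (mapDomain.addMonoidHom (NormalForm.cons t)))
    (g := (consHom (0, (t : S)) (n+1)).comp (ofNormalForms s₀ n)) (fun q => ?_) ξ
  simp only [AddMonoidHom.comp_apply, mapDomain.addMonoidHom_apply, mapDomain_single,
    ofNormalForms_single, consHom_mon, normalWord_cons]

theorem toNormalForms_ofNormalForms (n : ℕ) (ξ : NormalForm s₀ n →₀ ℤ) :
    toNormalForms s₀ n (ofNormalForms s₀ n ξ) = ξ := by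
  induction n with
  | zero =>
    refine hom_ext_apply_of_single (f := (toNormalForms s₀ 0).comp (ofNormalForms s₀ 0))
      (g := AddMonoidHom.id _) (fun q => ?_) ξ
    rw [AddMonoidHom.comp_apply, ofNormalForms_single, toNormalForms_zero_mon]
    congr 1
    exact Prod.ext (funext finZeroElim) rfl
  | succ n ih =>
    refine hom_ext_apply_of_single (f := (toNormalForms s₀ (n+1)).comp (ofNormalForms s₀ (n+1)))
      (g := AddMonoidHom.id _) (fun q => ?_) ξ
    obtain ⟨t, q, rfl⟩ := NormalForm.exists_eq_cons q
    rw [AddMonoidHom.comp_apply, ofNormalForms_single, normalWord_cons, toNormalForms_cons,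
      dif_neg t.2, ← ofNormalForms_single, ih, mapDomain_single]
    rfl

theorem modelD_normalWord {n : ℕ} (q : NormalForm s₀ n) :
    modelD {s₀} n (mon (normalWord q)) = 0 := by
  induction n with
  | zero => rfl
  | succ n ih =>
    obtain ⟨t, q, rfl⟩ := NormalForm.exists_eq_cons q
    rw [normalWord_cons, modelD_cons, if_neg (Set.notMem_singleton_iff.mpr t.2), ih, map_zero,
      sub_zero]

theorem modelD_ofNormalForms (n : ℕ) (ξ : NormalForm s₀ n →₀ ℤ) :
    modelD {s₀} n (ofNormalForms s₀ n ξ) = 0 :=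
  hom_ext_apply_of_single (f := (modelD {s₀} n).comp (ofNormalForms s₀ n)) (g := 0)
    (fun q => by rw [AddMonoidHom.comp_apply, ofNormalForms_single, modelD_normalWord]; rfl) ξ

theorem toNormalForms_modelD_cons (n : ℕ) (y : ℤ × S) (v : Fin (n+1) → ℤ × S) :
    toNormalForms s₀ n (modelD {s₀} (n+1) (mon (Fin.cons y v))) =
      -toNormalForms s₀ n (consHom y n (modelD {s₀} n (mon v))) := by
  rw [modelD_cons, map_sub]
  split_ifs <;> simp [toNormalForms_shiftHead]

theorem toNormalForms_modelD (n : ℕ) (x : CR (ℤ × S) (n+2)) :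
    toNormalForms s₀ n (modelD {s₀} (n+1) x) = 0 := by
  refine chain_hom_ext_apply_cons (f := (toNormalForms s₀ n).comp (modelD {s₀} (n+1))) (g := 0)
    (fun y v => ?_) x
  rw [AddMonoidHom.comp_apply, toNormalForms_modelD_cons,
    AddMonoidHom.zero_apply, neg_eq_zero]
  cases n with
  | zero => rw [modelD_zero, AddMonoidHom.zero_apply, map_zero, map_zero]
  | succ n =>
    by_cases h : y.2 = s₀
    · exact toNormalForms_consHom_of_eq n h _
    · rw [toNormalForms_consHom_of_ne n h, toNormalForms_modelD n, mapDomain_zero]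

theorem normalize_zero_cons (y : ℤ × S) (v : Fin 0 → ℤ × S) :
    normalize s₀ 0 (mon (Fin.cons y v)) = mon (Fin.cons (0, y.2) v) := by
  rw [normalize, AddMonoidHom.comp_apply, toNormalForms_zero_mon, ofNormalForms_single]
  congr 1
  funext j
  rw [Fin.fin_one_eq_zero j]
  rfl

theorem normalize_consHom_of_eq (n : ℕ) {y : ℤ × S} (h : y.2 = s₀) (x : CR (ℤ × S) (n+1)) :
    normalize s₀ (n+1) (consHom y (n+1) x) = 0 := by
  rw [normalize, AddMonoidHom.comp_apply, toNormalForms_consHom_of_eq n h, map_zero]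

theorem normalize_consHom_of_ne (n : ℕ) {y : ℤ × S} (h : y.2 ≠ s₀) (x : CR (ℤ × S) (n+1)) :
    normalize s₀ (n+1) (consHom y (n+1) x) = consHom (0, y.2) (n+1) (normalize s₀ n x) := by
  rw [normalize, AddMonoidHom.comp_apply, toNormalForms_consHom_of_ne n h,
    ofNormalForms_mapDomain_cons]
  rfl

end NormalForms

section Contraction

open scoped Classical

variable {S : Type} (s₀ : S)

/-- The condition `n ≠ 0` says that the first letter is not the last one. -/
def headHomotopy : (n : ℕ) → CR (ℤ × S) n →+ CR (ℤ × S) (n+1)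
  | 0 => 0
  | n+1 => liftAddHom fun w => zmultiplesHom _
      (if (w 0).2 = s₀ ∧ n ≠ 0 then -consHom (w 0) (n+1) (headHomotopy n (mon (Fin.tail w)))
       else fiberPrepend s₀ (n+1) (geom (w 0).1) (mon (Fin.cons (0, (w 0).2) (Fin.tail w))))

def headNormalize (n : ℕ) : CR (ℤ × S) (n+1) →+ CR (ℤ × S) (n+1) :=
  liftAddHom fun w => zmultiplesHom _
    (if (w 0).2 = s₀ ∧ n ≠ 0 then 0 else mon (Fin.cons (0, (w 0).2) (Fin.tail w)))

def homotopy : (n : ℕ) → CR (ℤ × S) n →+ CR (ℤ × S) (n+1)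
  | 0 => 0
  | n+1 => liftAddHom fun w => zmultiplesHom _
      (headHomotopy s₀ (n+1) (mon w) -
        if (w 0).2 = s₀ then 0 else consHom (0, (w 0).2) (n+1) (homotopy n (mon (Fin.tail w))))

variable {s₀}

theorem headHomotopy_zero : headHomotopy s₀ 0 = 0 := rfl

theorem homotopy_zero : homotopy s₀ 0 = 0 := rfl

theorem headHomotopy_cons (n : ℕ) (y : ℤ × S) (v : Fin n → ℤ × S) :
    headHomotopy s₀ (n+1) (mon (Fin.cons y v)) =
      if y.2 = s₀ ∧ n ≠ 0 then -consHom y (n+1) (headHomotopy s₀ n (mon v))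
      else fiberPrepend s₀ (n+1) (geom y.1) (mon (Fin.cons (0, y.2) v)) := by
  rw [headHomotopy, liftAddHom_mon, Fin.cons_zero, Fin.tail_cons]

theorem headNormalize_cons (n : ℕ) (y : ℤ × S) (v : Fin n → ℤ × S) :
    headNormalize s₀ n (mon (Fin.cons y v)) =
      if y.2 = s₀ ∧ n ≠ 0 then 0 else mon (Fin.cons (0, y.2) v) := by
  rw [headNormalize, liftAddHom_mon, Fin.cons_zero, Fin.tail_cons]

theorem homotopy_cons (n : ℕ) (y : ℤ × S) (v : Fin n → ℤ × S) :
    homotopy s₀ (n+1) (mon (Fin.cons y v)) =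
      headHomotopy s₀ (n+1) (mon (Fin.cons y v)) -
        if y.2 = s₀ then 0 else consHom (0, y.2) (n+1) (homotopy s₀ n (mon v)) := by
  rw [homotopy, liftAddHom_mon, Fin.cons_zero, Fin.tail_cons]

theorem headHomotopy_consHom_of_not {n : ℕ} {y : ℤ × S} (h : ¬(y.2 = s₀ ∧ n ≠ 0))
    (x : CR (ℤ × S) n) :
    headHomotopy s₀ (n+1) (consHom y n x) =
      fiberPrepend s₀ (n+1) (geom y.1) (consHom (0, y.2) n x) := by
  refine chain_hom_ext_apply (f := (headHomotopy s₀ (n+1)).comp (consHom y n))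
    (g := (fiberPrepend s₀ (n+1) (geom y.1)).comp (consHom (0, y.2) n)) (fun w => ?_) x
  simp only [AddMonoidHom.comp_apply, consHom_mon, headHomotopy_cons, if_neg h]

theorem headHomotopy_consHom_of_eq (n : ℕ) {y : ℤ × S} (h : y.2 = s₀) (x : CR (ℤ × S) (n+1)) :
    headHomotopy s₀ (n+2) (consHom y (n+1) x) = -consHom y (n+2) (headHomotopy s₀ (n+1) x) := by
  refine chain_hom_ext_apply (f := (headHomotopy s₀ (n+2)).comp (consHom y (n+1)))
    (g := -(consHom y (n+2)).comp (headHomotopy s₀ (n+1))) (fun w => ?_) x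
  simp only [AddMonoidHom.comp_apply, AddMonoidHom.neg_apply, consHom_mon, headHomotopy_cons,
    if_pos (And.intro h (Nat.succ_ne_zero n))]

theorem headHomotopy_consHom_modelD_of_eq (n : ℕ) {y : ℤ × S} (h : y.2 = s₀)
    (x : CR (ℤ × S) (n+1)) :
    headHomotopy s₀ (n+1) (consHom y n (modelD {s₀} n x)) =
      -consHom y (n+1) (headHomotopy s₀ n (modelD {s₀} n x)) := by
  cases n with
  | zero => simp [modelD_zero]
  | succ n => exact headHomotopy_consHom_of_eq n h _

theorem headNormalize_consHom_of_eq (n : ℕ) {y : ℤ × S} (h : y.2 = s₀) (x : CR (ℤ × S) (n+1)) :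
    headNormalize s₀ (n+1) (consHom y (n+1) x) = 0 := by
  refine chain_hom_ext_apply (f := (headNormalize s₀ (n+1)).comp (consHom y (n+1))) (g := 0)
    (fun w => ?_) x
  simp only [AddMonoidHom.comp_apply, consHom_mon, headNormalize_cons,
    if_pos (And.intro h (Nat.succ_ne_zero n)), AddMonoidHom.zero_apply]

theorem headNormalize_consHom_of_ne (n : ℕ) {y : ℤ × S} (h : y.2 ≠ s₀) (x : CR (ℤ × S) (n+1)) :
    headNormalize s₀ (n+1) (consHom y (n+1) x) = consHom (0, y.2) (n+1) x := by
  refine chain_hom_ext_apply (f := (headNormalize s₀ (n+1)).comp (consHom y (n+1)))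
    (g := consHom (0, y.2) (n+1)) (fun w => ?_) x
  simp only [AddMonoidHom.comp_apply, consHom_mon, headNormalize_cons, h, false_and, if_false]

theorem homotopy_consHom_of_eq (n : ℕ) {y : ℤ × S} (h : y.2 = s₀) (x : CR (ℤ × S) n) :
    homotopy s₀ (n+1) (consHom y n x) = headHomotopy s₀ (n+1) (consHom y n x) := by
  refine chain_hom_ext_apply (f := (homotopy s₀ (n+1)).comp (consHom y n))
    (g := (headHomotopy s₀ (n+1)).comp (consHom y n)) (fun w => ?_) x
  simp only [AddMonoidHom.comp_apply, consHom_mon, homotopy_cons, if_pos h, sub_zero]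

theorem homotopy_consHom_of_ne (n : ℕ) {y : ℤ × S} (h : y.2 ≠ s₀) (x : CR (ℤ × S) n) :
    homotopy s₀ (n+1) (consHom y n x) =
      headHomotopy s₀ (n+1) (consHom y n x) - consHom (0, y.2) (n+1) (homotopy s₀ n x) := by
  refine chain_hom_ext_apply (f := (homotopy s₀ (n+1)).comp (consHom y n))
    (g := (headHomotopy s₀ (n+1)).comp (consHom y n) - (consHom (0, y.2) (n+1)).comp
      (homotopy s₀ n)) (fun w => ?_) x
  simp only [AddMonoidHom.comp_apply, AddMonoidHom.sub_apply, consHom_mon, homotopy_cons,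
    if_neg h]

theorem headHomotopy_shiftHead (a : ℤ) (n : ℕ) (x : CR (ℤ × S) (n+1)) :
    headHomotopy s₀ (n+1) (shiftHead a n x) =
      shiftHead a (n+1) (headHomotopy s₀ (n+1) x) +
        fiberPrepend s₀ (n+1) (geom a) (headNormalize s₀ n x) := by
  refine chain_hom_ext_apply_cons (f := (headHomotopy s₀ (n+1)).comp (shiftHead a n))
    (g := (shiftHead a (n+1)).comp (headHomotopy s₀ (n+1)) +
      (fiberPrepend s₀ (n+1) (geom a)).comp (headNormalize s₀ n)) (fun y v => ?_) x
  simp only [AddMonoidHom.comp_apply, AddMonoidHom.add_apply]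
  rw [shiftHead_cons, headHomotopy_cons, headHomotopy_cons,
    headNormalize_cons, shiftLetter_snd]
  split_ifs
  · rw [map_neg, shiftHead_consHom, map_zero, add_zero]
  · rw [shiftHead_fiberPrepend, shiftLetter_fst, add_comm _ a, geom_add, map_add,
      AddMonoidHom.add_apply]
    exact add_comm _ _

theorem homotopy_sub_headHomotopy_shiftHead (a : ℤ) (n : ℕ) (x : CR (ℤ × S) (n+1)) :
    (homotopy s₀ (n+1) - headHomotopy s₀ (n+1)) (shiftHead a n x) =
      (homotopy s₀ (n+1) - headHomotopy s₀ (n+1)) x := by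
  refine chain_hom_ext_apply_cons
    (f := (homotopy s₀ (n+1) - headHomotopy s₀ (n+1)).comp (shiftHead a n))
    (g := homotopy s₀ (n+1) - headHomotopy s₀ (n+1)) (fun y v => ?_) x
  simp only [AddMonoidHom.comp_apply, AddMonoidHom.sub_apply]
  rw [shiftHead_cons, homotopy_cons, homotopy_cons, shiftLetter_snd,
    sub_sub_cancel_left, sub_sub_cancel_left]

theorem modelD_headHomotopy_consHom_of_ne (n : ℕ) {y : ℤ × S} (h : y.2 ≠ s₀)
    (x : CR (ℤ × S) (n+1)) :
    modelD {s₀} (n+2) (headHomotopy s₀ (n+2) (consHom y (n+1) x)) +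
        headHomotopy s₀ (n+1) (modelD {s₀} (n+1) (consHom y (n+1) x)) =
      consHom y (n+1) x - consHom (0, y.2) (n+1) x := by
  rw [headHomotopy_consHom_of_not (fun h' => h h'.1), modelD_fiberPrepend, headDiff_geom,
    shiftHead_consHom, modelD_consHom, modelD_consHom]
  simp only [Set.mem_singleton_iff, h, if_false, zero_sub, map_neg,
    headHomotopy_consHom_of_not (n := n) (fun h' : y.2 = s₀ ∧ _ => h h'.1)]
  simp [shiftLetter]

theorem modelD_headHomotopy_consHom_of_eq (n : ℕ) {y : ℤ × S} (h : y.2 = s₀)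
    (x : CR (ℤ × S) (n+1))
    (hx : modelD {s₀} (n+1) (headHomotopy s₀ (n+1) x) + headHomotopy s₀ n (modelD {s₀} n x) =
      x - headNormalize s₀ n x) :
    modelD {s₀} (n+2) (headHomotopy s₀ (n+2) (consHom y (n+1) x)) +
        headHomotopy s₀ (n+1) (modelD {s₀} (n+1) (consHom y (n+1) x)) =
      consHom y (n+1) x := by
  have hF : fiberPrepend s₀ (n+1) (geom y.1) (headNormalize s₀ n x) =
      consHom y (n+1) (headNormalize s₀ n x) +
        fiberPrepend s₀ (n+1) (geom (y.1 + 1)) (headNormalize s₀ n x) := by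
    have hy : ((y.1, s₀) : ℤ × S) = y := by rw [← h]
    rw [geom_add_one, map_sub, AddMonoidHom.sub_apply, fiberPrepend_single, hy]
    abel
  rw [headHomotopy_consHom_of_eq n h, map_neg, modelD_consHom, modelD_consHom,
    if_pos (Set.mem_singleton_iff.mpr h), if_pos (Set.mem_singleton_iff.mpr h), map_sub,
    map_sub, headHomotopy_shiftHead, headHomotopy_shiftHead, hF,
    headHomotopy_consHom_modelD_of_eq n h, eq_sub_of_add_eq hx]
  simp only [map_sub]
  abel

theorem modelD_headHomotopy (n : ℕ) (x : CR (ℤ × S) (n+1)) :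
    modelD {s₀} (n+1) (headHomotopy s₀ (n+1) x) + headHomotopy s₀ n (modelD {s₀} n x) =
      x - headNormalize s₀ n x := by
  induction n with
  | zero =>
    refine chain_hom_ext_apply_cons
      (f := (modelD {s₀} 1).comp (headHomotopy s₀ 1) + (headHomotopy s₀ 0).comp (modelD {s₀} 0))
      (g := AddMonoidHom.id _ - headNormalize s₀ 0) (fun y v => ?_) x
    simp [headHomotopy_cons, headNormalize_cons, modelD_fiberPrepend, headDiff_geom,
      shiftHead_cons, modelD_zero, shiftLetter]
  | succ n ih =>
    refine chain_hom_ext_apply_consHom (f := (modelD {s₀} (n+2)).comp (headHomotopy s₀ (n+2)) +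
        (headHomotopy s₀ (n+1)).comp (modelD {s₀} (n+1)))
      (g := AddMonoidHom.id _ - headNormalize s₀ (n+1)) (fun y v => ?_) x
    simp only [AddMonoidHom.add_apply, AddMonoidHom.comp_apply, AddMonoidHom.sub_apply,
      AddMonoidHom.id_apply]
    by_cases h : y.2 = s₀
    · rw [modelD_headHomotopy_consHom_of_eq n h _ (ih _), headNormalize_consHom_of_eq n h,
        sub_zero]
    · rw [modelD_headHomotopy_consHom_of_ne n h, headNormalize_consHom_of_ne n h]

theorem homotopy_modelD_consHom_of_eq (n : ℕ) {y : ℤ × S} (h : y.2 = s₀)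
    (x : CR (ℤ × S) (n+1)) :
    homotopy s₀ (n+1) (modelD {s₀} (n+1) (consHom y (n+1) x)) =
      headHomotopy s₀ (n+1) (modelD {s₀} (n+1) (consHom y (n+1) x)) := by
  rw [← sub_eq_zero, ← AddMonoidHom.sub_apply, modelD_consHom,
    if_pos (Set.mem_singleton_iff.mpr h), map_sub, map_sub, homotopy_sub_headHomotopy_shiftHead,
    homotopy_sub_headHomotopy_shiftHead, sub_self, zero_sub, AddMonoidHom.sub_apply,
    homotopy_consHom_of_eq n h, sub_self, neg_zero]

theorem homotopy_modelD_consHom_of_ne (n : ℕ) {y : ℤ × S} (h : y.2 ≠ s₀)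
    (x : CR (ℤ × S) (n+1)) :
    homotopy s₀ (n+1) (modelD {s₀} (n+1) (consHom y (n+1) x)) =
      headHomotopy s₀ (n+1) (modelD {s₀} (n+1) (consHom y (n+1) x)) +
        consHom (0, y.2) (n+1) (homotopy s₀ n (modelD {s₀} n x)) := by
  rw [modelD_consHom, if_neg (Set.notMem_singleton_iff.mpr h), zero_sub, map_neg, map_neg,
    homotopy_consHom_of_ne n h, neg_sub, sub_eq_neg_add]

theorem modelD_homotopy (n : ℕ) (x : CR (ℤ × S) (n+1)) :
    modelD {s₀} (n+1) (homotopy s₀ (n+1) x) + homotopy s₀ n (modelD {s₀} n x) =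
      x - normalize s₀ n x := by
  induction n with
  | zero =>
    refine chain_hom_ext_apply_cons
      (f := (modelD {s₀} 1).comp (homotopy s₀ 1) + (homotopy s₀ 0).comp (modelD {s₀} 0))
      (g := AddMonoidHom.id _ - normalize s₀ 0) (fun y v => ?_) x
    have h := modelD_headHomotopy (s₀ := s₀) 0 (mon (Fin.cons y v))
    simp only [headNormalize_cons, ne_eq, not_true_eq_false, and_false, if_false] at h
    simp [homotopy_cons, homotopy_zero, headHomotopy_zero, modelD_zero, normalize_zero_cons, ← h]
  | succ n ih =>
    refine chain_hom_ext_apply_consHom (f := (modelD {s₀} (n+2)).comp (homotopy s₀ (n+2)) +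
        (homotopy s₀ (n+1)).comp (modelD {s₀} (n+1)))
      (g := AddMonoidHom.id _ - normalize s₀ (n+1)) (fun y v => ?_) x
    simp only [AddMonoidHom.add_apply, AddMonoidHom.comp_apply, AddMonoidHom.sub_apply,
      AddMonoidHom.id_apply]
    by_cases h : y.2 = s₀
    · rw [homotopy_consHom_of_eq (n+1) h, homotopy_modelD_consHom_of_eq n h,
        modelD_headHomotopy, headNormalize_consHom_of_eq n h, normalize_consHom_of_eq n h]
    · rw [homotopy_consHom_of_ne (n+1) h, homotopy_modelD_consHom_of_ne n h, map_sub,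
        modelD_consHom, if_neg (Set.notMem_singleton_iff.mpr h), zero_sub,
        normalize_consHom_of_ne n h, eq_sub_of_add_eq (modelD_headHomotopy_consHom_of_ne n h _),
        eq_sub_of_add_eq (ih _)]
      simp only [map_sub]
      abel

end Contraction

section Homology

variable {S : Type}

def chainEquiv (s₀ : S) (n : ℕ) : CR (ℤ × S) n ≃+ CR (ℤ × S) n :=
  (diffEquiv n 0).trans (rebaseEquiv s₀ n)

theorem chainEquiv_d (s₀ : S) (n : ℕ) (x : CR (ℤ × S) (n+1)) :
    chainEquiv s₀ n (d (prodOp S) n x) = modelD {s₀} n (chainEquiv s₀ (n+1) x) := by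
  change rebase s₀ 1 n (diffEquiv n 0 _) = modelD {s₀} n (rebase s₀ 1 (n+1) (diffEquiv (n+1) 0 x))
  rw [diffEquiv_d, rebase_modelD_univ]

theorem nonempty_HR_addEquiv_normalForms (s₀ : S) (m : ℕ) :
    Nonempty (HR (ℤ × S) (prodOp S) (m+1) ≃+ (NormalForm s₀ m →₀ ℤ)) := by
  let Ξ := chainEquiv s₀
  have hΞ (n : ℕ) (y : CR (ℤ × S) (n+1)) :
      d (prodOp S) n ((Ξ (n+1)).symm y) = (Ξ n).symm (modelD {s₀} n y) := by
    rw [AddEquiv.eq_symm_apply, chainEquiv_d, AddEquiv.apply_symm_apply]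
  refine nonempty_HR_addEquiv_of_retraction
    ((toNormalForms s₀ m).comp (Ξ (m+1)).toAddMonoidHom)
    ((Ξ (m+1)).symm.toAddMonoidHom.comp (ofNormalForms s₀ m))
    ((Ξ (m+2)).symm.toAddMonoidHom.comp ((homotopy s₀ (m+1)).comp (Ξ (m+1)).toAddMonoidHom))
    (fun ξ => ?_) (fun ξ => ?_) (fun x => ?_) (fun x hx => ?_) <;>
    simp only [AddMonoidHom.comp_apply, AddEquiv.coe_toAddMonoidHom]
  · rw [AddEquiv.apply_symm_apply, toNormalForms_ofNormalForms]
  · rw [hΞ, modelD_ofNormalForms, map_zero]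
  · rw [chainEquiv_d, toNormalForms_modelD]
  · have hcycle : modelD {s₀} m (Ξ (m+1) x) = 0 := by rw [← chainEquiv_d, hx, map_zero]
    have h := modelD_homotopy (s₀ := s₀) m (Ξ (m+1) x)
    rw [hcycle, map_zero, add_zero, normalize, AddMonoidHom.comp_apply] at h
    rw [hΞ, ← map_add, AddEquiv.eq_symm_apply, h, add_sub_cancel]

open scoped Classical in
theorem card_normalForm [Fintype S] (s₀ : S) (m : ℕ) :
    Fintype.card (NormalForm s₀ m) = Fintype.card S * (Fintype.card S - 1) ^ m := by
  simp [Fintype.card_subtype_compl, mul_comm]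

end Homology

theorem mul_pow_pred_lt {r n : ℕ} (hr : 0 < r) (hn : 0 < n) :
    r * (r - 1) ^ (n - 1) < r ^ n + r ^ (n - 1) := by
  obtain ⟨m, rfl⟩ : ∃ m, n = m + 1 := ⟨n - 1, by omega⟩
  rw [Nat.add_sub_cancel, pow_succ']
  exact (Nat.mul_le_mul_left r (Nat.pow_le_pow_left (Nat.sub_le r 1) m)).trans_lt
    (Nat.lt_add_of_pos_right (by positivity))

end ProductRack

end

/-- Naive Künneth fails for rack homology: for the product rack `(ℤ,+1) × (S,id)` with
`|S| = r ≥ 2` and `n ≥ 2`, the rank `r(r−1)^{n−1}` of `HR_n` differs from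
`Σ_{p+q=n} rank HR_p(ℤ,+1) · rank HR_q(S,id) = r^n + r^{n−1}`. -/
theorem naive_kunneth_fails (S : Type) [Fintype S] (r : ℕ) (hr : Fintype.card S = r)
    (h2 : 2 ≤ r) (n : ℕ) (hn : 2 ≤ n) :
    Nonempty (HR (ℤ × S) (prodOp S) n ≃+ (Fin (r * (r-1)^(n-1)) → ℤ)) ∧
      r * (r-1)^(n-1) ≠ r^n + r^(n-1) := by
  classical
  refine ⟨?_, (ProductRack.mul_pow_pred_lt (by omega) (by omega)).ne⟩
  obtain ⟨m, rfl⟩ : ∃ m, n = m + 1 := ⟨n - 1, by omega⟩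
  obtain ⟨s₀⟩ : Nonempty S := Fintype.card_pos_iff.mp (by omega)
  obtain ⟨e⟩ := ProductRack.nonempty_HR_addEquiv_normalForms s₀ m
  have hcard : Fintype.card (ProductRack.NormalForm s₀ m) = r * (r - 1) ^ (m + 1 - 1) := by
    rw [ProductRack.card_normalForm, hr, Nat.add_sub_cancel]
  exact ⟨e.trans ((Finsupp.domCongr (Fintype.equivFinOfCardEq hcard)).trans
    Finsupp.addEquivFunOnFinite)⟩
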